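/- arXiv:2404.16750 — 3 statements merged into one kernel-verified Lean document; each statement's English description precedes it below -/
import Mathlib

section
/- DSW fitting, harmonic edge: fix u₊ > 0 and define k : [u₊, ∞) → ℝ by k(ū) = arccos( (2u₊ − ū)/ū ). Then k(u₊) = 0, k(ū) ∈ (0, π) for all ū > u₊, and for every ū > u₊ the function k is differentiable with k'(ū) = sin(k(ū)) / ( ū (1 − cos(k(ū))) ). Hence k solves the DSW-fitting initial value problem dk/dū = Φ'''(ū) sin k / ( Φ''(ū)(1 − cos k) ), k(u₊) = 0, for the cubic potential Φ(u) = u³/3. -/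
/-!
Along the curve, `c = cos k = 2u₊/ū - 1`, so `1 + cos k = 2u₊/ū` and `dc/dū = -(1 + cos k)/ū`.
Hence `k' = (1 + cos k)/(ū sin k)`, which is `sin k/(ū (1 - cos k))` because
`(1 + cos k)(1 - cos k) = sin² k`.
-/

open Real Set

theorem two_mul_sub_div_mem_Ioo {a x : ℝ} (ha : 0 < a) (hax : a < x) :
    (2 * a - x) / x ∈ Ioo (-1) 1 := by
  have hx : 0 < x := ha.trans hax
  constructor
  · rw [lt_div_iff₀ hx]; linarith
  · rw [div_lt_one hx]; linarith

theorem arccos_mem_Ioo {c : ℝ} (hc : c ∈ Ioo (-1) 1) : arccos c ∈ Ioo 0 π :=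
  ⟨arccos_pos.2 hc.2, arccos_lt_pi.2 hc.1⟩

theorem one_add_cos_div_sin {θ : ℝ} (h : sin θ ≠ 0) :
    (1 + cos θ) / sin θ = sin θ / (1 - cos θ) := by
  have hcos : 1 - cos θ ≠ 0 := by
    intro h1
    apply h
    nlinarith [sin_sq_add_cos_sq θ]
  rw [div_eq_div_iff h hcos]
  nlinarith [sin_sq_add_cos_sq θ]

theorem hasDerivAt_arccos_two_mul_sub_div {a x : ℝ} (ha : 0 < a) (hax : a < x) :
    HasDerivAt (fun y => arccos ((2 * a - y) / y))
      (sin (arccos ((2 * a - x) / x)) / (x * (1 - cos (arccos ((2 * a - x) / x))))) x := by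
  have hx : 0 < x := ha.trans hax
  have hc := two_mul_sub_div_mem_Ioo ha hax
  set c := (2 * a - x) / x with hc_def
  have hsin : sin (arccos c) ≠ 0 :=
    (sin_pos_of_pos_of_lt_pi (arccos_mem_Ioo hc).1 (arccos_mem_Ioo hc).2).ne'
  have hcos : cos (arccos c) = c := cos_arccos hc.1.le hc.2.le
  have hinner : HasDerivAt (fun y => (2 * a - y) / y) (-(1 + c) / x) x := by
    refine (((hasDerivAt_id x).const_sub (2 * a)).div (hasDerivAt_id x) hx.ne').congr_deriv ?_
    rw [id, hc_def]
    field_simp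
    ring
  refine ((hasDerivAt_arccos hc.1.ne' hc.2.ne).comp x hinner).congr_deriv ?_
  have hcot := one_add_cos_div_sin hsin
  rw [hcos] at hcot
  rw [← sin_arccos, hcos, mul_comm x, ← div_div, ← hcot]
  ring

/-- DSW fitting, harmonic edge: for `u₊ > 0`, the function
`k(ū) = arccos((2u₊ − ū)/ū)` satisfies `k(u₊) = 0`, `k(ū) ∈ (0, π)` for `ū > u₊`, and
`k'(ū) = sin(k(ū)) / (ū (1 − cos(k(ū))))` for `ū > u₊`; hence it solves the DSW-fitting
initial value problem `dk/dū = Φ'''(ū) sin k / (Φ''(ū)(1 − cos k))`, `k(u₊) = 0`, for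
the cubic potential `Φ(u) = u³/3` (where `Φ''(ū) = 2ū`, `Φ'''(ū) = 2`). -/
theorem dsw_fitting_harmonic_edge (up : ℝ) (hup : 0 < up) (k : ℝ → ℝ)
    (hk : k = fun ub => Real.arccos ((2 * up - ub) / ub)) :
    k up = 0
    ∧ (∀ ub : ℝ, up < ub → k ub ∈ Set.Ioo 0 π)
    ∧ (∀ ub : ℝ, up < ub →
        HasDerivAt k (Real.sin (k ub) / (ub * (1 - Real.cos (k ub)))) ub)
    ∧ (∀ ub : ℝ, up < ub →
        HasDerivAt k ((2 * Real.sin (k ub)) / ((2 * ub) * (1 - Real.cos (k ub)))) ub) := by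
  subst hk
  have hderiv := fun ub (hub : up < ub) => hasDerivAt_arccos_two_mul_sub_div hup hub
  refine ⟨?_, fun ub hub => arccos_mem_Ioo (two_mul_sub_div_mem_Ioo hup hub), hderiv,
    fun ub hub => ?_⟩
  · change arccos ((2 * up - up) / up) = 0
    rw [two_mul, add_sub_cancel_right, div_self hup.ne', arccos_one]
  · rw [mul_assoc, mul_div_mul_left _ _ two_ne_zero]
    exact hderiv ub hub
end

section
/- DSW fitting, soliton edge: fix u₋ > 0 and define k̃ : (0, u₋] → ℝ by k̃(ū) = arccosh( (2u₋ − ū)/ū ). Then k̃(u₋) = 0, k̃(ū) > 0 for 0 < ū < u₋, and for every ū ∈ (0, u₋) the function k̃ is differentiable with k̃'(ū) = sinh(k̃(ū)) / ( ū (1 − cosh(k̃(ū))) ). Moreover, 2 ū sinh(k̃(ū)) = 4 √( u₋ (u₋ − ū) ) for all ū ∈ (0, u₋], so that for 0 < u₊ < u₋ the soliton edge speed satisfies c₊ = Φ''(u₊) sinh(k̃(u₊)) / k̃(u₊) = 4 √( u₋ (u₋ − u₊) ) / arccosh( (2u₋ − u₊)/u₊ ). -/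
/-!
Write `x = (2u₋ − ū)/ū`, so that `x ≥ 1` on `(0, u₋]` and `x² − 1 = 4u₋(u₋ − ū)/ū²`.
Then `sinh k̃ = √(x² − 1)` gives the closed form of `2ū sinh k̃`, and the fitting ODE follows
from the chain rule with `arcosh' x = 1/√(x² − 1) = 1/sinh k̃` together with `ū x = 2u₋ − ū`.
-/

open Real

noncomputable def arcosh (x : ℝ) : ℝ := Real.log (x + Real.sqrt (x ^ 2 - 1))

theorem arcosh_eq_real_arcosh : _root_.arcosh = Real.arcosh := rfl

section Fitting

variable {um ub : ℝ}

theorem one_le_two_mul_sub_div (hub : 0 < ub) (hle : ub ≤ um) : 1 ≤ (2 * um - ub) / ub := by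
  rw [le_div_iff₀ hub]; linarith

theorem one_lt_two_mul_sub_div (hub : 0 < ub) (hlt : ub < um) : 1 < (2 * um - ub) / ub := by
  rw [lt_div_iff₀ hub]; linarith

theorem sqrt_two_mul_sub_div_sq_sub_one (hub : 0 < ub) (hle : ub ≤ um) :
    √(((2 * um - ub) / ub) ^ 2 - 1) = 2 * √(um * (um - ub)) / ub := by
  have hsq : ((2 * um - ub) / ub) ^ 2 - 1 = (2 * √(um * (um - ub)) / ub) ^ 2 := by
    rw [div_pow, div_pow, mul_pow, sq_sqrt (by nlinarith)]
    field_simp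
    ring
  rw [hsq, sqrt_sq (by positivity)]

theorem two_mul_mul_sinh_arcosh_two_mul_sub_div (hub : 0 < ub) (hle : ub ≤ um) :
    2 * ub * sinh (Real.arcosh ((2 * um - ub) / ub)) = 4 * √(um * (um - ub)) := by
  rw [sinh_arcosh (one_le_two_mul_sub_div hub hle), sqrt_two_mul_sub_div_sq_sub_one hub hle]
  field_simp
  ring

theorem hasDerivAt_arcosh_two_mul_sub_div (hub : 0 < ub) (hlt : ub < um) :
    HasDerivAt (fun u => Real.arcosh ((2 * um - u) / u))
      (sinh (Real.arcosh ((2 * um - ub) / ub)) /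
        (ub * (1 - cosh (Real.arcosh ((2 * um - ub) / ub))))) ub := by
  set x := (2 * um - ub) / ub with hx
  have hx1 : 1 < x := one_lt_two_mul_sub_div hub hlt
  have hinner : HasDerivAt (fun u => (2 * um - u) / u) (-(2 * um) / ub ^ 2) ub :=
    (((hasDerivAt_id ub).const_sub (2 * um)).div (hasDerivAt_id ub) hub.ne').congr_deriv
      (by simp only [id]; ring)
  refine ((hasDerivAt_arcosh hx1).comp ub hinner).congr_deriv ?_
  rw [sinh_arcosh hx1.le, cosh_arcosh hx1.le]
  set s := √(x ^ 2 - 1)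
  have hs : s ^ 2 = x ^ 2 - 1 := sq_sqrt (by nlinarith)
  have hs0 : s ≠ 0 := (sqrt_pos.mpr (by nlinarith)).ne'
  have hubx : ub * x = 2 * um - ub := by rw [hx]; field_simp
  have h1x : 1 - x ≠ 0 := by linarith
  clear_value x s
  field_simp
  linear_combination (-ub) * hs + (1 - x) * hubx

end Fitting

/-- DSW fitting, soliton edge: for `u₋ > 0`, the function
`k̃(ū) = arcosh((2u₋ − ū)/ū)` satisfies `k̃(u₋) = 0`, `k̃(ū) > 0` for `0 < ū < u₋`, and
`k̃'(ū) = sinh(k̃(ū)) / (ū(1 − cosh(k̃(ū))))` for `ū ∈ (0, u₋)`.  Moreover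
`2ū sinh(k̃(ū)) = 4√(u₋(u₋ − ū))` on `(0, u₋]`, so that for `0 < u₊ < u₋` the soliton
edge speed satisfies
`c₊ = Φ''(u₊) sinh(k̃(u₊))/k̃(u₊) = 4√(u₋(u₋ − u₊)) / arcosh((2u₋ − u₊)/u₊)`. -/
theorem dsw_fitting_soliton_edge (um : ℝ) (hum : 0 < um) (kt : ℝ → ℝ)
    (hkt : kt = fun ub => _root_.arcosh ((2 * um - ub) / ub)) :
    kt um = 0
    ∧ (∀ ub : ℝ, 0 < ub → ub < um → 0 < kt ub)
    ∧ (∀ ub : ℝ, 0 < ub → ub < um →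
        HasDerivAt kt (Real.sinh (kt ub) / (ub * (1 - Real.cosh (kt ub)))) ub)
    ∧ (∀ ub : ℝ, 0 < ub → ub ≤ um →
        2 * ub * Real.sinh (kt ub) = 4 * Real.sqrt (um * (um - ub)))
    ∧ (∀ up : ℝ, 0 < up → up < um →
        (2 * up) * Real.sinh (kt up) / kt up
          = 4 * Real.sqrt (um * (um - up)) / _root_.arcosh ((2 * um - up) / up)) := by
  subst hkt
  simp only [arcosh_eq_real_arcosh]
  have sinh_fit := fun ub (hub : 0 < ub) (hle : ub ≤ um) =>
    two_mul_mul_sinh_arcosh_two_mul_sub_div hub hle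
  refine ⟨?_, fun ub hub hlt => arcosh_pos (one_lt_two_mul_sub_div hub hlt),
    fun ub hub hlt => hasDerivAt_arcosh_two_mul_sub_div hub hlt, sinh_fit,
    fun up hup hlt => by rw [sinh_fit up hup hlt.le]⟩
  rw [show (2 * um - um) / um = 1 by field_simp; ring, arcosh_zero]
end

section
/- Riemann invariants of the weakly nonlinear modulation system: let u₀ > 0 be constant and let a, k : ℝ × (0, ∞) → ℝ be continuously differentiable with a(x,t) > 0 and 0 < k(x,t) < π for all (x,t), satisfying ∂_t(a²) + ∂_x( 2u₀ cos(k) · a² ) = 0 and ∂_t k + ∂_x( 2u₀ sin k ) + ω̃₂(k) ∂_x(a²) = 0, where ω̃₂(k) = (cos k − 2) cot(k/2) / (16 u₀). Then the functions r_± = a ∓ 2√2 u₀ arccos( (−1 + 2 cos k)/3 ) satisfy the diagonal transport equations ∂_t r_± + λ_± ∂_x r_± = 0 with characteristic speeds λ_± = 2u₀ cos k ± (a/2) cos(k/2) √(2 − cos k). -/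
/-!
Dividing the first equation by `2a`, the system is quasilinear in `(a, k)`:
`a_t + V a_x + P k_x = 0`, `k_t + V k_x + Q a_x = 0`, with `V = 2u₀ cos k`,
`P = -u₀ a sin k` and `Q = 2a ω̃₂`. If `(1, -ρ)` is a left eigenvector of the coefficient matrix
with eigenvalue `V + μ`, i.e. `ρ μ + P = 0` and `ρ Q + μ = 0`, then `r` with `dr = da - ρ dk` is
transported with speed `V + μ`, and `(1, ρ)` gives speed `V - μ`. Here
`ρ = 4u₀ sin(k/2) / √(2 - cos k)` is the `k`-derivative of `2√2 u₀ arccos((-1 + 2 cos k)/3)`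
and `μ = (a/2) cos(k/2) √(2 - cos k)`.
-/

open Real Set

theorem riemann_invariant_transport {R : Type*} [CommRing R] {V P Q ρ μ At Ax Kt Kx : R}
    (h₁ : At + V * Ax + P * Kx = 0) (h₂ : Kt + V * Kx + Q * Ax = 0)
    (hP : ρ * μ + P = 0) (hQ : ρ * Q + μ = 0) :
    At - ρ * Kt + (V + μ) * (Ax - ρ * Kx) = 0 ∧ At + ρ * Kt + (V - μ) * (Ax + ρ * Kx) = 0 :=
  ⟨by linear_combination h₁ - ρ * h₂ + Ax * hQ - Kx * hP,
    by linear_combination h₁ + ρ * h₂ - Ax * hQ - Kx * hP⟩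

section Partials

variable {𝕜 E F G : Type*} [NontriviallyNormedField 𝕜] [NormedAddCommGroup E] [NormedSpace 𝕜 E]
  [NormedAddCommGroup F] [NormedSpace 𝕜 F] [NormedAddCommGroup G] [NormedSpace 𝕜 G]
  {f : E → F → G} {x : E} {y : F}

theorem DifferentiableAt.left_of_uncurry
    (hf : DifferentiableAt 𝕜 (fun p : E × F => f p.1 p.2) (x, y)) :
    DifferentiableAt 𝕜 (fun x' => f x' y) x :=
  hf.comp (f := fun x' => (x', y)) x (by fun_prop)

theorem DifferentiableAt.right_of_uncurry
    (hf : DifferentiableAt 𝕜 (fun p : E × F => f p.1 p.2) (x, y)) :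
    DifferentiableAt 𝕜 (fun y' => f x y') y :=
  hf.comp (f := fun y' => (x, y')) y (by fun_prop)

end Partials

theorem differentiableAt_partials_of_contDiffOn {f : ℝ → ℝ → ℝ}
    (hf : ContDiffOn ℝ 1 (fun p : ℝ × ℝ => f p.1 p.2) (univ ×ˢ Ioi 0)) {x t : ℝ} (ht : 0 < t) :
    DifferentiableAt ℝ (fun y => f y t) x ∧ DifferentiableAt ℝ (fun s => f x s) t := by
  have hmem : (x, t) ∈ univ ×ˢ Ioi (0 : ℝ) := ⟨trivial, ht⟩
  have hdiff : DifferentiableAt ℝ (fun p : ℝ × ℝ => f p.1 p.2) (x, t) :=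
    (hf.contDiffAt ((isOpen_univ.prod isOpen_Ioi).mem_nhds hmem)).differentiableAt one_ne_zero
  exact ⟨hdiff.left_of_uncurry, hdiff.right_of_uncurry⟩

theorem sqrt_one_sub_sq_riemann {k : ℝ} (hc : 0 ≤ cos (k / 2)) :
    √(1 - ((-1 + 2 * cos k) / 3) ^ 2) = 2 * √2 * cos (k / 2) * √(2 - cos k) / 3 := by
  have hcos : cos k = 2 * cos (k / 2) ^ 2 - 1 := by
    rw [← cos_two_mul, mul_div_cancel₀ k two_ne_zero]
  have hq : √(2 - cos k) ^ 2 = 2 - cos k := sq_sqrt (by linarith [cos_le_one k])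
  rw [← sqrt_sq (by positivity : 0 ≤ 2 * √2 * cos (k / 2) * √(2 - cos k) / 3)]
  congr 1
  simp only [div_pow, mul_pow, hq, sq_sqrt zero_le_two]
  rw [hcos]
  ring

theorem hasDerivAt_arccos_riemann {k : ℝ} (hc : 0 < cos (k / 2)) :
    HasDerivAt (fun κ => arccos ((-1 + 2 * cos κ) / 3)) (√2 * sin (k / 2) / √(2 - cos k)) k := by
  have hcos : cos k = 2 * cos (k / 2) ^ 2 - 1 := by
    rw [← cos_two_mul, mul_div_cancel₀ k two_ne_zero]
  have hsin : sin k = 2 * sin (k / 2) * cos (k / 2) := by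
    rw [← sin_two_mul, mul_div_cancel₀ k two_ne_zero]
  have hinner : HasDerivAt (fun κ => (-1 + 2 * cos κ) / 3) (2 * -sin k / 3) k :=
    (((hasDerivAt_cos k).const_mul 2).const_add (-1)).div_const 3
  have harccos := (hasDerivAt_arccos (x := (-1 + 2 * cos k) / 3)
    (by nlinarith) (by linarith [cos_le_one k])).comp k hinner
  refine harccos.congr_deriv ?_
  rw [sqrt_one_sub_sq_riemann hc.le, hsin]
  field_simp
  rw [sq_sqrt zero_le_two]

theorem HasDerivAt.arccos_riemann {g : ℝ → ℝ} {g' t : ℝ} (hg : HasDerivAt g g' t)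
    (hc : 0 < Real.cos (g t / 2)) :
    HasDerivAt (fun s => Real.arccos ((-1 + 2 * Real.cos (g s)) / 3))
      (√2 * Real.sin (g t / 2) / √(2 - Real.cos (g t)) * g') t :=
  (hasDerivAt_arccos_riemann hc).comp t hg

section ModulationSystem

variable {a k : ℝ → ℝ → ℝ} {x t : ℝ}

theorem amplitude_eq_quasilinear (u₀ : ℝ) (haX : DifferentiableAt ℝ (fun y => a y t) x)
    (haT : DifferentiableAt ℝ (fun s => a x s) t) (hkX : DifferentiableAt ℝ (fun y => k y t) x)
    (ha : a x t ≠ 0)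
    (h : deriv (fun s => (a x s) ^ 2) t
      + deriv (fun y => 2 * u₀ * cos (k y t) * (a y t) ^ 2) x = 0) :
    deriv (fun s => a x s) t + 2 * u₀ * cos (k x t) * deriv (fun y => a y t) x
      + -(u₀ * a x t * sin (k x t)) * deriv (fun y => k y t) x = 0 := by
  rw [(haT.hasDerivAt.fun_pow 2).deriv,
    ((hkX.hasDerivAt.cos.const_mul (2 * u₀)).fun_mul (haX.hasDerivAt.fun_pow 2)).deriv] at h
  refine (mul_eq_zero.mp ?_).resolve_left (mul_ne_zero two_ne_zero ha)
  linear_combination h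

theorem wavenumber_eq_quasilinear (u₀ ω : ℝ) (haX : DifferentiableAt ℝ (fun y => a y t) x)
    (hkX : DifferentiableAt ℝ (fun y => k y t) x)
    (h : deriv (fun s => k x s) t + deriv (fun y => 2 * u₀ * sin (k y t)) x
      + ω * deriv (fun y => (a y t) ^ 2) x = 0) :
    deriv (fun s => k x s) t + 2 * u₀ * cos (k x t) * deriv (fun y => k y t) x
      + 2 * a x t * ω * deriv (fun y => a y t) x = 0 := by
  rw [(hkX.hasDerivAt.sin.const_mul (2 * u₀)).deriv, (haX.hasDerivAt.fun_pow 2).deriv] at h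
  linear_combination h

end ModulationSystem

theorem modulation_left_eigenvector_fst (u₀ k A : ℝ) :
    2 * √2 * u₀ * (√2 * sin (k / 2) / √(2 - cos k)) * (A / 2 * cos (k / 2) * √(2 - cos k))
      + -(u₀ * A * sin k) = 0 := by
  have hq : √(2 - cos k) ≠ 0 := (sqrt_pos.mpr (by linarith [cos_le_one k])).ne'
  have hsin : sin k = 2 * sin (k / 2) * cos (k / 2) := by
    rw [← sin_two_mul, mul_div_cancel₀ k two_ne_zero]
  rw [hsin]
  field_simp
  rw [sq_sqrt zero_le_two]
  ring

theorem modulation_left_eigenvector_snd {u₀ k : ℝ} (A : ℝ) (hu₀ : u₀ ≠ 0)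
    (hs : sin (k / 2) ≠ 0) :
    2 * √2 * u₀ * (√2 * sin (k / 2) / √(2 - cos k))
        * (2 * A * ((cos k - 2) * (cos (k / 2) / sin (k / 2)) / (16 * u₀)))
      + A / 2 * cos (k / 2) * √(2 - cos k) = 0 := by
  have hq : √(2 - cos k) ^ 2 = 2 - cos k := sq_sqrt (by linarith [cos_le_one k])
  have hq0 : √(2 - cos k) ≠ 0 := (sqrt_pos.mpr (by linarith [cos_le_one k])).ne'
  field_simp
  rw [sq_sqrt zero_le_two, hq]
  ring

/-- Riemann invariants of the weakly nonlinear modulation system: if `a > 0` and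
`0 < k < π` solve `(a²)_t + (2u₀ cos k · a²)_x = 0` and
`k_t + (2u₀ sin k)_x + ω̃₂(k)(a²)_x = 0` with
`ω̃₂(k) = (cos k − 2) cot(k/2)/(16u₀)`, then
`r_± = a ∓ 2√2 u₀ arccos((−1 + 2cos k)/3)` satisfy `∂_t r_± + λ_± ∂_x r_± = 0` with
`λ_± = 2u₀ cos k ± (a/2) cos(k/2) √(2 − cos k)`. -/
theorem riemann_invariants_weakly_nonlinear_modulation (u₀ : ℝ) (hu₀ : 0 < u₀)
    (a k : ℝ → ℝ → ℝ)
    (ha : ContDiffOn ℝ 1 (fun p : ℝ × ℝ => a p.1 p.2) (Set.univ ×ˢ Set.Ioi 0))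
    (hk : ContDiffOn ℝ 1 (fun p : ℝ × ℝ => k p.1 p.2) (Set.univ ×ˢ Set.Ioi 0))
    (hapos : ∀ (x t : ℝ), 0 < t → 0 < a x t)
    (hkrange : ∀ (x t : ℝ), 0 < t → 0 < k x t ∧ k x t < π)
    (heq1 : ∀ (x t : ℝ), 0 < t →
      deriv (fun s => (a x s) ^ 2) t
        + deriv (fun y => 2 * u₀ * Real.cos (k y t) * (a y t) ^ 2) x = 0)
    (heq2 : ∀ (x t : ℝ), 0 < t →
      deriv (fun s => k x s) t
        + deriv (fun y => 2 * u₀ * Real.sin (k y t)) x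
        + ((Real.cos (k x t) - 2) * (Real.cos (k x t / 2) / Real.sin (k x t / 2))
            / (16 * u₀)) * deriv (fun y => (a y t) ^ 2) x = 0) :
    ∀ (x t : ℝ), 0 < t →
      (deriv (fun s => a x s
            - 2 * Real.sqrt 2 * u₀ * Real.arccos ((-1 + 2 * Real.cos (k x s)) / 3)) t
        + (2 * u₀ * Real.cos (k x t)
            + (a x t / 2) * Real.cos (k x t / 2) * Real.sqrt (2 - Real.cos (k x t)))
          * deriv (fun y => a y t
            - 2 * Real.sqrt 2 * u₀ * Real.arccos ((-1 + 2 * Real.cos (k y t)) / 3)) x = 0)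
      ∧ (deriv (fun s => a x s
            + 2 * Real.sqrt 2 * u₀ * Real.arccos ((-1 + 2 * Real.cos (k x s)) / 3)) t
        + (2 * u₀ * Real.cos (k x t)
            - (a x t / 2) * Real.cos (k x t / 2) * Real.sqrt (2 - Real.cos (k x t)))
          * deriv (fun y => a y t
            + 2 * Real.sqrt 2 * u₀ * Real.arccos ((-1 + 2 * Real.cos (k y t)) / 3)) x = 0) := by
  intro x t ht
  obtain ⟨hk0, hkπ⟩ := hkrange x t ht
  have hs : 0 < sin (k x t / 2) := sin_pos_of_pos_of_lt_pi (by linarith) (by linarith)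
  have hc : 0 < cos (k x t / 2) := cos_pos_of_mem_Ioo ⟨by linarith [pi_pos], by linarith⟩
  obtain ⟨haX, haT⟩ := differentiableAt_partials_of_contDiffOn ha ht
  obtain ⟨hkX, hkT⟩ := differentiableAt_partials_of_contDiffOn hk ht
  have h₁ := amplitude_eq_quasilinear u₀ haX haT hkX (hapos x t ht).ne' (heq1 x t ht)
  have h₂ := wavenumber_eq_quasilinear u₀ _ haX hkX (heq2 x t ht)
  have hP := modulation_left_eigenvector_fst u₀ (k x t) (a x t)
  have hQ := modulation_left_eigenvector_snd (a x t) hu₀.ne' hs.ne'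
  have hRt := (hkT.hasDerivAt.arccos_riemann hc).const_mul (2 * √2 * u₀)
  have hRx := (hkX.hasDerivAt.arccos_riemann hc).const_mul (2 * √2 * u₀)
  obtain ⟨hminus, hplus⟩ := riemann_invariant_transport h₁ h₂ hP hQ
  constructor
  · rw [(haT.hasDerivAt.fun_sub hRt).deriv, (haX.hasDerivAt.fun_sub hRx).deriv]
    linear_combination hminus
  · rw [(haT.hasDerivAt.fun_add hRt).deriv, (haX.hasDerivAt.fun_add hRx).deriv]
    linear_combination hplus
end
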